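/- arXiv:2107.07680 — 6 statements merged into one kernel-verified Lean document; each statement's English description precedes it below -/
import Mathlib

section
/- Let f : (0,∞) → ℝ be smooth and let F : (0,∞) → ℝ be an antiderivative of s ↦ s·f(s) − 1. If J ⊆ ℝ is an open interval and z : J → ℂ is differentiable with z(t) ≠ 0 and z′(t) = i·z(t)·f(|z(t)|) − i for all t ∈ J, then the function t ↦ Re z(t) − F(|z(t)|) − |z(t)| is constant on J (i.e. H_f(z) = Re z − F(|z|) − |z| is a first integral of the ODE). -/
/-!
Along a solution, `d/dt Re z = Re z' = -f(|z|) Im z` and `d/dt |z| = ⟪z, z'⟫ / |z| = -Im z / |z|`,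
since `⟪z, i z f(|z|)⟫ = 0` and `⟪z, -i⟫ = -Im z`. As `(F + id)'(s) = s f(s)`, the chain rule gives
`d/dt (F(|z|) + |z|) = -f(|z|) Im z`, which cancels the derivative of `Re z`.
-/

open Set Complex InnerProductSpace

theorem HasDerivAt.norm {E : Type*} [NormedAddCommGroup E] [InnerProductSpace ℝ E]
    {g : ℝ → E} {g' : E} {t : ℝ} (hg : HasDerivAt g g' t) (h0 : g t ≠ 0) :
    HasDerivAt (fun s => ‖g s‖) (⟪g t, g'⟫_ℝ / ‖g t‖) t := by
  have hsq := (hg.norm_sq).sqrt (by positivity)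
  simp only [Real.sqrt_sq (norm_nonneg _)] at hsq
  convert hsq using 1
  field_simp

theorem Convex.eq_of_hasDerivWithinAt_eq_zero {E : Type*} [NormedAddCommGroup E]
    [NormedSpace ℝ E] {f : ℝ → E} {s : Set ℝ} (hs : Convex ℝ s)
    (hf : ∀ x ∈ s, HasDerivWithinAt f 0 s x) {x y : ℝ} (hx : x ∈ s) (hy : y ∈ s) :
    f x = f y := by
  have := hs.norm_image_sub_le_of_norm_hasDerivWithin_le (C := 0) hf (by simp) hx hy
  rw [zero_mul, norm_le_zero_iff, sub_eq_zero] at this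
  exact this.symm

noncomputable def firstIntegral (F : ℝ → ℝ) (w : ℂ) : ℝ := w.re - F ‖w‖ - ‖w‖

noncomputable def odeField (f : ℝ → ℝ) (w : ℂ) : ℂ := I * w * f ‖w‖ - I

theorem re_odeField (f : ℝ → ℝ) (w : ℂ) : (odeField f w).re = -(w.im * f ‖w‖) := by
  simp [odeField]

theorem inner_odeField (f : ℝ → ℝ) (w : ℂ) : ⟪w, odeField f w⟫_ℝ = -w.im := by
  simp [odeField, Complex.inner, Complex.mul_re, Complex.mul_im]
  ring

theorem hasDerivAt_firstIntegral_comp {F : ℝ → ℝ} {f : ℝ → ℝ}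
    (hF : ∀ s ∈ Ioi (0 : ℝ), HasDerivAt F (s * f s - 1) s) {z : ℝ → ℂ} {t : ℝ} (h0 : z t ≠ 0)
    (hz : HasDerivAt z (odeField f (z t)) t) :
    HasDerivAt (fun s => firstIntegral F (z s)) 0 t := by
  have hpos : 0 < ‖z t‖ := norm_pos_iff.mpr h0
  have hre : HasDerivAt (fun s => (z s).re) (-((z t).im * f ‖z t‖)) t :=
    (reCLM.hasFDerivAt.comp_hasDerivAt t hz).congr_deriv (re_odeField _ _)
  have hnorm : HasDerivAt (fun s => ‖z s‖) (-(z t).im / ‖z t‖) t := by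
    simpa only [inner_odeField] using HasDerivAt.norm hz h0
  refine ((hre.sub ((hF _ hpos).comp t hnorm)).sub hnorm).congr_deriv ?_
  field_simp
  ring

theorem stmt0_general (f F : ℝ → ℝ)
    (hF : ∀ s ∈ Set.Ioi (0:ℝ), HasDerivAt F (s * f s - 1) s)
    (J : Set ℝ) (hJconn : J.OrdConnected)
    (z : ℝ → ℂ)
    (hz0 : ∀ t ∈ J, z t ≠ 0)
    (hz : ∀ t ∈ J, HasDerivAt z
      (Complex.I * z t * (f (‖z t‖) : ℂ) - Complex.I) t) :
    ∀ t₁ ∈ J, ∀ t₂ ∈ J,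
      (z t₁).re - F (‖z t₁‖) - ‖z t₁‖
        = (z t₂).re - F (‖z t₂‖) - ‖z t₂‖ :=
  fun _ h₁ _ h₂ => hJconn.convex.eq_of_hasDerivWithinAt_eq_zero
    (f := fun t => firstIntegral F (z t))
    (fun t ht => (hasDerivAt_firstIntegral_comp hF (hz0 t ht) (hz t ht)).hasDerivWithinAt) h₁ h₂

/-- `H_f(z) = Re z − F(|z|) − |z|` is a first integral of the ODE
`z′ = i·z·f(|z|) − i` on ℂ \ {0}. -/
theorem stmt0 (f F : ℝ → ℝ)
    (hf : ContDiffOn ℝ (⊤ : ℕ∞) f (Set.Ioi 0))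
    (hF : ∀ s ∈ Set.Ioi (0:ℝ), HasDerivAt F (s * f s - 1) s)
    (J : Set ℝ) (hJopen : IsOpen J) (hJconn : J.OrdConnected)
    (z : ℝ → ℂ)
    (hz0 : ∀ t ∈ J, z t ≠ 0)
    (hz : ∀ t ∈ J, HasDerivAt z
      (Complex.I * z t * (f (‖z t‖) : ℂ) - Complex.I) t) :
    ∀ t₁ ∈ J, ∀ t₂ ∈ J,
      (z t₁).re - F (‖z t₁‖) - ‖z t₁‖
        = (z t₂).re - F (‖z t₂‖) - ‖z t₂‖ :=
  stmt0_general f F hF J hJconn z hz0 hz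
end

section
/- Let f : (0,∞) → ℝ be smooth, J ⊆ ℝ an open interval, and c : J → ℂ twice differentiable with |c′(t)| = 1, c(t) ≠ 0 and c″(t) = i·f(|c(t)|)·c′(t) for all t ∈ J (so c is a unit-speed curve whose curvature at time t equals f(|c(t)|)). Then the function z(t) := −i·conj(c(t))·c′(t) satisfies |z(t)| = |c(t)| and z′(t) = i·z(t)·f(|z(t)|) − i for all t ∈ J. -/
/-! By the product rule, `(-i·conj c·c')' = -i·(|c'|² + conj c·iκ·c') = iκ·(-i·conj c·c') - i`
once `|c'| = 1`. -/

open Complex ComplexConjugate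

lemma norm_neg_I_mul_conj_mul (a b : ℂ) : ‖-I * conj a * b‖ = ‖a‖ * ‖b‖ := by
  simp

lemma conj_mul_self_of_norm_eq_one {b : ℂ} (hb : ‖b‖ = 1) : conj b * b = 1 := by
  rw [conj_mul', hb]
  norm_num

lemma hasDerivAt_neg_I_mul_conj_mul {c c' : ℝ → ℂ} {κ : ℂ} {t : ℝ}
    (hc : HasDerivAt c (c' t) t) (hc' : HasDerivAt c' (I * κ * c' t) t)
    (hunit : ‖c' t‖ = 1) :
    HasDerivAt (fun u => -I * conj (c u) * c' u) (I * (-I * conj (c t) * c' t) * κ - I) t := by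
  have hz : HasDerivAt (fun u => -I * (conj (c u) * c' u))
      (-I * (conj (c' t) * c' t + conj (c t) * (I * κ * c' t))) t :=
    (hc.star.mul hc').const_mul (-I)
  rw [conj_mul_self_of_norm_eq_one hunit] at hz
  convert hz using 1
  · ext u
    ring
  · ring

theorem stmt1_general (f : ℝ → ℝ)
    (J : Set ℝ)
    (c c' : ℝ → ℂ)
    (hc : ∀ t ∈ J, HasDerivAt c (c' t) t)
    (hc' : ∀ t ∈ J, HasDerivAt c'
      (Complex.I * (f ‖c t‖ : ℂ) * c' t) t)
    (hunit : ∀ t ∈ J, ‖c' t‖ = 1) :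
    ∀ t ∈ J,
      ‖-Complex.I * (starRingEnd ℂ) (c t) * c' t‖ = ‖c t‖ ∧
      HasDerivAt (fun u => -Complex.I * (starRingEnd ℂ) (c u) * c' u)
        (Complex.I * (-Complex.I * (starRingEnd ℂ) (c t) * c' t) *
            (f ‖-Complex.I * (starRingEnd ℂ) (c t) * c' t‖ : ℂ)
          - Complex.I) t := by
  intro t ht
  have hnorm : ‖-I * conj (c t) * c' t‖ = ‖c t‖ := by
    rw [norm_neg_I_mul_conj_mul, hunit t ht, mul_one]
  refine ⟨hnorm, ?_⟩
  rw [hnorm]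
  exact hasDerivAt_neg_I_mul_conj_mul (hc t ht) (hc' t ht) (hunit t ht)

/-- If `c` is a unit-speed curve (away from the origin) whose curvature at time `t`
equals `f(|c(t)|)`, then `z(t) = −i·conj(c(t))·c′(t)` satisfies `|z| = |c|` and solves
`z′ = i·z·f(|z|) − i`. -/
theorem stmt1 (f : ℝ → ℝ)
    (hf : ContDiffOn ℝ (⊤ : ℕ∞) f (Set.Ioi 0))
    (J : Set ℝ) (hJopen : IsOpen J) (hJconn : J.OrdConnected)
    (c c' : ℝ → ℂ)
    (hc : ∀ t ∈ J, HasDerivAt c (c' t) t)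
    (hc' : ∀ t ∈ J, HasDerivAt c'
      (Complex.I * (f ‖c t‖ : ℂ) * c' t) t)
    (hunit : ∀ t ∈ J, ‖c' t‖ = 1)
    (hne : ∀ t ∈ J, c t ≠ 0) :
    ∀ t ∈ J,
      ‖-Complex.I * (starRingEnd ℂ) (c t) * c' t‖ = ‖c t‖ ∧
      HasDerivAt (fun u => -Complex.I * (starRingEnd ℂ) (c u) * c' u)
        (Complex.I * (-Complex.I * (starRingEnd ℂ) (c t) * c' t) *
            (f ‖-Complex.I * (starRingEnd ℂ) (c t) * c' t‖ : ℂ)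
          - Complex.I) t :=
  stmt1_general f J c c' hc hc' hunit
end

section
/- Let f : (0,∞) → ℝ be smooth and let z : ℝ → ℂ be differentiable with z(t) ≠ 0 for all t ∈ ℝ and z′(t) = i·z(t)·f(|z(t)|) − i. Fix θ ∈ ℝ and define c : ℝ → ℂ by c(t) = |z(0)|·exp(i·θ + i·∫_0^t du/conj(z(u))). Then for all t ∈ ℝ: |c′(t)| = 1, c″(t) = i·f(|c(t)|)·c′(t), and −i·conj(c(t))·c′(t) = z(t). -/
open Set Filter Topology MeasureTheory intervalIntegral

/-!
Writing `z′ = z·(i f(|z|) − i/z)`, the logarithmic derivative `i/conj z` of `c` has the same real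
part as that of `z`, and `|c(0)| = |z(0)|`, so `|c| = |z|` everywhere. Then
`−i·conj(c)·c′ = |c|²/conj z = z` and `|c′| = |c|/|z| = 1`. Finally `w = 1/conj z` satisfies
`w′ = w·(i f(|z|) − i w)`, so differentiating `c′ = c·(i w)` gives `c″ = i f(|z|)·c′`.
-/

open Complex ComplexConjugate

theorem eq_of_hasDerivAt_mul_of_ne_zero {𝕜 : Type*} [NontriviallyNormedField 𝕜]
    [NormedAlgebra ℝ 𝕜] {a y₁ y₂ : ℝ → 𝕜} (h₁ : ∀ t, HasDerivAt y₁ (a t * y₁ t) t)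
    (h₂ : ∀ t, HasDerivAt y₂ (a t * y₂ t) t) (hy₂ : ∀ t, y₂ t ≠ 0) (h₀ : y₁ 0 = y₂ 0)
    (t : ℝ) : y₁ t = y₂ t := by
  have hquot : ∀ t, HasDerivAt (y₁ / y₂) 0 t := fun t ↦ by
    convert (h₁ t).div (h₂ t) (hy₂ t) using 1
    ring
  have hconst := is_const_of_deriv_eq_zero (fun t ↦ (hquot t).differentiableAt)
    (fun t ↦ (hquot t).deriv) t 0
  simp only [Pi.div_apply, h₀, div_self (hy₂ 0)] at hconst
  exact (div_eq_one_iff_eq (hy₂ t)).mp hconst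

theorem HasDerivAt.norm_sq_of_eq_mul {c : ℝ → ℂ} {h : ℂ} {t : ℝ}
    (hc : HasDerivAt c (c t * h) t) :
    HasDerivAt (fun t ↦ ‖c t‖ ^ 2) (2 * h.re * ‖c t‖ ^ 2) t := by
  convert hc.norm_sq using 1
  rw [Complex.inner, mul_right_comm (c t), mul_conj', ← ofReal_pow, re_ofReal_mul]
  ring

theorem norm_eq_of_hasDerivAt_mul_of_re_eq {c z h k : ℝ → ℂ}
    (hc : ∀ t, HasDerivAt c (c t * h t) t) (hz : ∀ t, HasDerivAt z (z t * k t) t)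
    (hre : ∀ t, (h t).re = (k t).re) (hz0 : ∀ t, z t ≠ 0) (h₀ : ‖c 0‖ = ‖z 0‖) (t : ℝ) :
    ‖c t‖ = ‖z t‖ := by
  have hsq : ‖c t‖ ^ 2 = ‖z t‖ ^ 2 :=
    eq_of_hasDerivAt_mul_of_ne_zero (fun t ↦ (hc t).norm_sq_of_eq_mul)
      (fun t ↦ (hz t).norm_sq_of_eq_mul.congr_deriv (by rw [hre]))
      (by simpa using hz0) (by rw [h₀]) t
  exact (pow_left_inj₀ (norm_nonneg _) (norm_nonneg _) two_ne_zero).mp hsq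

theorem HasDerivAt.conj_inv_of_eq_mul {z : ℝ → ℂ} {h : ℂ} {t : ℝ}
    (hz : HasDerivAt z (z t * h) t) (hz0 : z t ≠ 0) :
    HasDerivAt (fun t ↦ (conj (z t))⁻¹) ((conj (z t))⁻¹ * -conj h) t := by
  have hconj0 : conj (z t) ≠ 0 := (map_ne_zero _).mpr hz0
  refine (hz.star.inv hconj0).congr_deriv ?_
  simp only [star_def, map_mul]
  field_simp

theorem hasDerivAt_mul_cexp_integral {g : ℝ → ℂ} (hg : Continuous g) (a b k : ℂ) (t : ℝ) :
    HasDerivAt (fun t ↦ a * exp (b + k * ∫ u in (0 : ℝ)..t, g u))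
      (a * exp (b + k * ∫ u in (0 : ℝ)..t, g u) * (k * g t)) t := by
  have hint : HasDerivAt (fun t ↦ ∫ u in (0 : ℝ)..t, g u) (g t) t :=
    integral_hasDerivAt_right (hg.intervalIntegrable _ _)
      hg.aestronglyMeasurable.stronglyMeasurableAtFilter hg.continuousAt
  exact (((hint.const_mul k).const_add b).cexp.const_mul a).congr_deriv (mul_assoc _ _ _).symm

theorem stmt2_general (f : ℝ → ℝ)
    (z : ℝ → ℂ) (hz0 : ∀ t, z t ≠ 0)
    (hz : ∀ t, HasDerivAt z
      (Complex.I * z t * (f ‖z t‖ : ℂ) - Complex.I) t)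
    (θ : ℝ) (c : ℝ → ℂ)
    (hc : ∀ t, c t = (‖z 0‖ : ℂ) *
      Complex.exp (Complex.I * (θ : ℂ)
        + Complex.I * ∫ u in (0:ℝ)..t, ((starRingEnd ℂ) (z u))⁻¹)) :
    ∀ t, ‖deriv c t‖ = 1 ∧
      deriv (deriv c) t = Complex.I * (f ‖c t‖ : ℂ) * deriv c t ∧
      -Complex.I * (starRingEnd ℂ) (c t) * deriv c t = z t := by
  set w : ℝ → ℂ := fun u ↦ (conj (z u))⁻¹ with hw_def
  have hz' : ∀ t, HasDerivAt z (z t * (I * f ‖z t‖ - I * (z t)⁻¹)) t := fun t ↦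
    (hz t).congr_deriv (by field_simp [hz0 t])
  have hw' : ∀ t, HasDerivAt w (w t * (I * f ‖z t‖ - I * w t)) t := fun t ↦
    ((hz' t).conj_inv_of_eq_mul (hz0 t)).congr_deriv
      (by simp only [hw_def, map_sub, map_mul, conj_I, conj_ofReal, map_inv₀]; ring)
  have hc' : ∀ t, HasDerivAt c (c t * (I * w t)) t := by
    have hw : Continuous w := continuous_iff_continuousAt.mpr fun t ↦ (hw' t).continuousAt
    simpa only [← funext hc, ← hc] using hasDerivAt_mul_cexp_integral hw (‖z 0‖ : ℂ) (I * θ) I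
  have hnorm : ∀ t, ‖c t‖ = ‖z t‖ :=
    norm_eq_of_hasDerivAt_mul_of_re_eq hc' hz' (fun t ↦ by simp [hw_def, neg_div]) hz0
      (by simp [hc 0, norm_exp])
  have hderiv : deriv c = fun t ↦ c t * (I * w t) := funext fun t ↦ (hc' t).deriv
  intro t
  refine ⟨by simp [hderiv, hnorm, hw_def, hz0], ?_, ?_⟩
  · rw [hderiv, ((hc' t).fun_mul ((hw' t).const_mul I)).deriv, hnorm]
    ring
  · calc -I * conj (c t) * deriv c t = conj (c t) * c t * w t := by
          rw [hderiv]; linear_combination (-(conj (c t) * c t * w t)) * I_sq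
      _ = z t := by rw [conj_mul', hnorm, ← conj_mul', hw_def]; field_simp [hz0 t]

/-- From a nonvanishing global solution of `z′ = i·z·f(|z|) − i` one reconstructs a
unit-speed curve `c(t) = |z(0)|·exp(iθ + i∫₀ᵗ du/conj z(u))` with curvature `f(|c|)`
and `−i·conj(c)·c′ = z`. -/
theorem stmt2 (f : ℝ → ℝ)
    (hf : ContDiffOn ℝ (⊤ : ℕ∞) f (Set.Ioi 0))
    (z : ℝ → ℂ) (hz0 : ∀ t, z t ≠ 0)
    (hz : ∀ t, HasDerivAt z
      (Complex.I * z t * (f ‖z t‖ : ℂ) - Complex.I) t)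
    (θ : ℝ) (c : ℝ → ℂ)
    (hc : ∀ t, c t = (‖z 0‖ : ℂ) *
      Complex.exp (Complex.I * (θ : ℂ)
        + Complex.I * ∫ u in (0:ℝ)..t, ((starRingEnd ℂ) (z u))⁻¹)) :
    ∀ t, ‖deriv c t‖ = 1 ∧
      deriv (deriv c) t = Complex.I * (f ‖c t‖ : ℂ) * deriv c t ∧
      -Complex.I * (starRingEnd ℂ) (c t) * deriv c t = z t :=
  stmt2_general f z hz0 hz θ c hc
end

section
/- With f in the class F* (f > 0), suppose the function s ↦ F″(s)·F(s)/F′(s)², extended continuously by the value 1/2 at s = s_f, is increasing (respectively, decreasing) on (0,∞). Then: (i) the map s ↦ s* is concave (respectively, convex) on (0, s_f); (ii) the function s ↦ F′(s)²/F(s), extended continuously by the value 2·F″(s_f) at s = s_f, is increasing (respectively, decreasing) on (0,∞); and (iii) F′ is convex (respectively, concave) on (0,∞). -/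
/-! Write `A = F′`, `B = F″` and `K = B F / A²`. Differentiating `F (s*) = F s` twice gives
`s*″ = A(s)² (K s - K s*) / (F s · A(s*))`, whose sign is that of `K s - K s*` since `s < s*`.
The derivative of `G = A² / F` is `A³ (2K - 1) / F²`, and `A` and `2K - 1` change sign together
at `s_f` when `K` is monotone with `K s_f = 1/2`. Finally `F″ = K · G` is a product of positive
functions that increase (or decrease) together. -/

open Set Filter Topology

theorem StrictMonoOn.continuousAt_of_comp_eq {F g h : ℝ → ℝ} {S : Set ℝ} {s₀ : ℝ}
    (hF : StrictMonoOn F S) (hS : S ∈ 𝓝 (g s₀)) (hgS : ∀ᶠ s in 𝓝 s₀, g s ∈ S)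
    (hh : ContinuousAt h s₀) (hFg : ∀ᶠ s in 𝓝 s₀, F (g s) = h s) : ContinuousAt g s₀ := by
  obtain ⟨ε, hε, hball⟩ := Metric.mem_nhds_iff.1 hS
  rw [ContinuousAt, Metric.tendsto_nhds]
  intro δ hδ
  obtain ⟨r, hr, hrε, hrδ⟩ : ∃ r, 0 < r ∧ r < ε ∧ r < δ :=
    ⟨min ε δ / 2, by positivity, by linarith [min_le_left ε δ], by linarith [min_le_right ε δ]⟩
  have hlo : g s₀ - r ∈ S := hball (by simp [abs_of_pos hr, hrε])
  have hhi : g s₀ + r ∈ S := hball (by simp [abs_of_pos hr, hrε])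
  have h₀ : g s₀ ∈ S := mem_of_mem_nhds hS
  have hFg₀ : F (g s₀) = h s₀ := hFg.self_of_nhds
  have hbracket : h s₀ ∈ Ioo (F (g s₀ - r)) (F (g s₀ + r)) :=
    hFg₀ ▸ ⟨hF hlo h₀ (by linarith), hF h₀ hhi (by linarith)⟩
  filter_upwards [hh.eventually (Ioo_mem_nhds hbracket.1 hbracket.2), hgS, hFg]
    with s hs hsS hFs
  rw [← hFs] at hs
  have h₁ := (hF.lt_iff_lt hlo hsS).1 hs.1
  have h₂ := (hF.lt_iff_lt hsS hhi).1 hs.2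
  rw [Real.dist_eq, abs_lt]
  constructor <;> linarith

theorem HasStrictDerivAt.hasDerivAt_of_comp_eq {F g h : ℝ → ℝ} {F' h' s₀ : ℝ}
    (hF : HasStrictDerivAt F F' (g s₀)) (hF' : F' ≠ 0) (hg : ContinuousAt g s₀)
    (hh : HasDerivAt h h' s₀) (hFg : ∀ᶠ s in 𝓝 s₀, F (g s) = h s) :
    HasDerivAt g (h' / F') s₀ := by
  have hinv := (hF.to_localInverse hF').hasDerivAt
  rw [hFg.self_of_nhds] at hinv
  have heq : g =ᶠ[𝓝 s₀] hF.localInverse F F' (g s₀) hF' ∘ h := by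
    filter_upwards [hg.tendsto.eventually (hF.eventually_left_inverse hF'), hFg] with s hs hFs
    rw [Function.comp_apply, ← hFs, hs]
  rw [div_eq_inv_mul]
  exact (hinv.comp s₀ hh).congr_of_eventuallyEq heq

theorem strictMonoOn_Ioi_of_deriv_pos {G : ℝ → ℝ} {b a : ℝ} (hab : b < a)
    (hG : ContinuousOn G (Ioi b)) (hG' : ∀ s ∈ Ioi b, s ≠ a → 0 < deriv G s) :
    StrictMonoOn G (Ioi b) := by
  rw [← Ioc_union_Ici_eq_Ioi hab]
  refine StrictMonoOn.union
    (strictMonoOn_of_deriv_pos (convex_Ioc b a) (hG.mono Ioc_subset_Ioi_self) fun s hs => ?_)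
    (strictMonoOn_of_deriv_pos (convex_Ici a) (hG.mono (Ici_subset_Ioi.2 hab)) fun s hs => ?_)
    ⟨right_mem_Ioc.2 hab, fun _ h => h.2⟩ isLeast_Ici
  · rw [interior_Ioc] at hs
    exact hG' s hs.1 hs.2.ne
  · rw [interior_Ici] at hs
    exact hG' s (hab.trans hs) hs.ne'

theorem strictAntiOn_Ioi_of_deriv_neg {G : ℝ → ℝ} {b a : ℝ} (hab : b < a)
    (hG : ContinuousOn G (Ioi b)) (hG' : ∀ s ∈ Ioi b, s ≠ a → deriv G s < 0) :
    StrictAntiOn G (Ioi b) := by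
  simpa using (strictMonoOn_Ioi_of_deriv_pos hab hG.neg fun s hs ha => by
    simpa [deriv.neg'] using hG' s hs ha).neg

structure IsPotentialWell (F : ℝ → ℝ) (a : ℝ) : Prop where
  zero_lt : 0 < a
  differentiableAt : ∀ s ∈ Ioi 0, DifferentiableAt ℝ F s
  deriv_deriv_pos : ∀ s ∈ Ioi 0, 0 < deriv (deriv F) s
  deriv_eq_zero : deriv F a = 0
  eq_zero : F a = 0

namespace IsPotentialWell

variable {F : ℝ → ℝ} {a s : ℝ}

-- `deriv` is `0` where `F′` is not differentiable, so `F″ > 0` already forces differentiability.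
theorem differentiableAt_deriv (hW : IsPotentialWell F a) (hs : 0 < s) :
    DifferentiableAt ℝ (deriv F) s :=
  differentiableAt_of_deriv_ne_zero (hW.deriv_deriv_pos s hs).ne'

theorem hasDerivAt (hW : IsPotentialWell F a) (hs : 0 < s) : HasDerivAt F (deriv F s) s :=
  (hW.differentiableAt s hs).hasDerivAt

theorem hasDerivAt_deriv (hW : IsPotentialWell F a) (hs : 0 < s) :
    HasDerivAt (deriv F) (deriv (deriv F) s) s :=
  (hW.differentiableAt_deriv hs).hasDerivAt

theorem continuousOn (hW : IsPotentialWell F a) : ContinuousOn F (Ioi 0) :=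
  fun _ hs => (hW.differentiableAt _ hs).continuousAt.continuousWithinAt

theorem continuousOn_deriv (hW : IsPotentialWell F a) : ContinuousOn (deriv F) (Ioi 0) :=
  fun _ hs => (hW.differentiableAt_deriv hs).continuousAt.continuousWithinAt

theorem hasStrictDerivAt (hW : IsPotentialWell F a) (hs : 0 < s) :
    HasStrictDerivAt F (deriv F s) s :=
  hasStrictDerivAt_of_hasDerivAt_of_continuousAt
    (eventually_gt_nhds hs |>.mono fun _ hu => hW.hasDerivAt hu)
    (hW.differentiableAt_deriv hs).continuousAt

theorem strictMonoOn_deriv (hW : IsPotentialWell F a) : StrictMonoOn (deriv F) (Ioi 0) :=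
  strictMonoOn_of_deriv_pos (convex_Ioi 0) hW.continuousOn_deriv
    (by simpa only [interior_Ioi] using hW.deriv_deriv_pos)

theorem deriv_neg (hW : IsPotentialWell F a) (h₀ : 0 < s) (ha : s < a) : deriv F s < 0 :=
  hW.deriv_eq_zero ▸ hW.strictMonoOn_deriv h₀ hW.zero_lt ha

theorem deriv_pos (hW : IsPotentialWell F a) (ha : a < s) : 0 < deriv F s :=
  hW.deriv_eq_zero ▸ hW.strictMonoOn_deriv hW.zero_lt (hW.zero_lt.trans ha) ha

theorem deriv_ne_zero (hW : IsPotentialWell F a) (h₀ : 0 < s) (ha : s ≠ a) : deriv F s ≠ 0 :=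
  ha.lt_or_gt.elim (fun h => (hW.deriv_neg h₀ h).ne) (fun h => (hW.deriv_pos h).ne')

theorem strictAntiOn (hW : IsPotentialWell F a) : StrictAntiOn F (Ioc 0 a) :=
  strictAntiOn_of_deriv_neg (convex_Ioc 0 a) (hW.continuousOn.mono Ioc_subset_Ioi_self)
    fun s hs => by
      rw [interior_Ioc] at hs
      exact (hW.hasDerivAt hs.1).deriv ▸ hW.deriv_neg hs.1 hs.2

theorem strictMonoOn (hW : IsPotentialWell F a) : StrictMonoOn F (Ici a) :=
  strictMonoOn_of_deriv_pos (convex_Ici a)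
    (hW.continuousOn.mono fun _ hs => hW.zero_lt.trans_le hs)
    fun s hs => by
      rw [interior_Ici] at hs
      exact (hW.hasDerivAt (hW.zero_lt.trans hs)).deriv ▸ hW.deriv_pos hs

theorem pos_of_ne (hW : IsPotentialWell F a) (h₀ : 0 < s) (ha : s ≠ a) : 0 < F s := by
  rcases ha.lt_or_gt with h | h
  · exact hW.eq_zero ▸ hW.strictAntiOn ⟨h₀, h.le⟩ ⟨hW.zero_lt, le_rfl⟩ h
  · exact hW.eq_zero ▸ hW.strictMonoOn self_mem_Ici h.le h

theorem tendsto_deriv_div_sub (hW : IsPotentialWell F a) :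
    Tendsto (fun s => deriv F s / (s - a)) (𝓝[≠] a) (𝓝 (deriv (deriv F) a)) := by
  refine (hasDerivAt_iff_tendsto_slope.1 (hW.hasDerivAt_deriv hW.zero_lt)).congr fun s => ?_
  rw [slope_def_field, hW.deriv_eq_zero, sub_zero]

-- `F″` need not be continuous at `a`, so l'Hôpital is applied to `F / (s - a)²`, not to `F′² / F`.
theorem tendsto_div_sub_sq (hW : IsPotentialWell F a) :
    Tendsto (fun s => F s / (s - a) ^ 2) (𝓝[≠] a) (𝓝 (deriv (deriv F) a / 2)) := by
  have hnear : ∀ᶠ s in 𝓝[≠] a, 0 < s ∧ s ≠ a :=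
    (eventually_nhdsWithin_of_eventually_nhds (eventually_gt_nhds hW.zero_lt)).and
      self_mem_nhdsWithin
  refine HasDerivAt.lhopital_zero_nhdsNE (f' := deriv F) (g' := fun s => 2 * (s - a))
    (hnear.mono fun s hs => hW.hasDerivAt hs.1) (hnear.mono fun s _ => ?_)
    (hnear.mono fun s hs => by simpa [sub_eq_zero] using hs.2) ?_ ?_ ?_
  · simpa using ((hasDerivAt_id' s).sub_const a).fun_pow 2
  · simpa [hW.eq_zero] using
      (hW.differentiableAt a hW.zero_lt).continuousAt.tendsto.mono_left nhdsWithin_le_nhds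
  · exact tendsto_nhdsWithin_of_tendsto_nhds (Continuous.tendsto' (by fun_prop) a 0 (by simp))
  · refine (hW.tendsto_deriv_div_sub.div_const 2).congr fun s => ?_
    rw [div_div, mul_comm]

theorem tendsto_sq_deriv_div (hW : IsPotentialWell F a) :
    Tendsto (fun s => deriv F s ^ 2 / F s) (𝓝[≠] a) (𝓝 (2 * deriv (deriv F) a)) := by
  have hpos := hW.deriv_deriv_pos a hW.zero_lt
  have hlim := (hW.tendsto_deriv_div_sub.pow 2).div hW.tendsto_div_sub_sq (by positivity)
  rw [show 2 * deriv (deriv F) a = deriv (deriv F) a ^ 2 / (deriv (deriv F) a / 2) by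
    field_simp]
  refine hlim.congr' ?_
  filter_upwards [self_mem_nhdsWithin] with s hs
  have : s - a ≠ 0 := sub_ne_zero.2 hs
  simp only [Pi.div_apply]
  field_simp

variable {K G sStar : ℝ → ℝ}

theorem mul_sq_deriv_eq (hW : IsPotentialWell F a)
    (hK : ∀ s ∈ Ioi (0:ℝ), s ≠ a → K s = deriv (deriv F) s * F s / (deriv F s)^2)
    (h₀ : 0 < s) (ha : s ≠ a) : K s * deriv F s ^ 2 = deriv (deriv F) s * F s := by
  rw [hK s h₀ ha, div_mul_cancel₀ _ (pow_ne_zero 2 (hW.deriv_ne_zero h₀ ha))]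

theorem continuousAt_sStar (hW : IsPotentialWell F a)
    (hsStar : ∀ s ∈ Ioo 0 a, a < sStar s ∧ F (sStar s) = F s) (hs : s ∈ Ioo 0 a) :
    ContinuousAt sStar s :=
  hW.strictMonoOn.continuousAt_of_comp_eq (Ici_mem_nhds (hsStar s hs).1)
    (eventually_of_mem (isOpen_Ioo.mem_nhds hs) fun u hu => (hsStar u hu).1.le)
    (hW.differentiableAt s hs.1).continuousAt
    (eventually_of_mem (isOpen_Ioo.mem_nhds hs) fun u hu => (hsStar u hu).2)

theorem hasDerivAt_sStar (hW : IsPotentialWell F a)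
    (hsStar : ∀ s ∈ Ioo 0 a, a < sStar s ∧ F (sStar s) = F s) (hs : s ∈ Ioo 0 a) :
    HasDerivAt sStar (deriv F s / deriv F (sStar s)) s :=
  (hW.hasStrictDerivAt (hW.zero_lt.trans (hsStar s hs).1)).hasDerivAt_of_comp_eq
    (hW.deriv_pos (hsStar s hs).1).ne' (hW.continuousAt_sStar hsStar hs) (hW.hasDerivAt hs.1)
    (eventually_of_mem (isOpen_Ioo.mem_nhds hs) fun u hu => (hsStar u hu).2)

theorem hasDerivAt_deriv_div_deriv_sStar (hW : IsPotentialWell F a)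
    (hsStar : ∀ s ∈ Ioo 0 a, a < sStar s ∧ F (sStar s) = F s)
    (hK : ∀ s ∈ Ioi (0:ℝ), s ≠ a → K s = deriv (deriv F) s * F s / (deriv F s)^2)
    (hs : s ∈ Ioo 0 a) :
    HasDerivAt (fun u => deriv F u / deriv F (sStar u))
      (deriv F s ^ 2 * (K s - K (sStar s)) / (F s * deriv F (sStar s))) s := by
  obtain ⟨ht, hFt⟩ := hsStar s hs
  have ht₀ := hW.zero_lt.trans ht
  have hden := (hW.hasDerivAt_deriv ht₀).comp s (hW.hasDerivAt_sStar hsStar hs)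
  refine ((hW.hasDerivAt_deriv hs.1).div hden (hW.deriv_pos ht).ne').congr_deriv ?_
  have hKs := hW.mul_sq_deriv_eq hK hs.1 hs.2.ne
  have hKt := hW.mul_sq_deriv_eq hK ht₀ ht.ne'
  rw [hFt] at hKt
  have := hW.pos_of_ne hs.1 hs.2.ne
  have := hW.deriv_pos ht
  simp only [Function.comp_apply]
  field_simp
  linear_combination (-deriv F (sStar s) ^ 2) * hKs + deriv F s ^ 2 * hKt

theorem concaveOn_sStar (hW : IsPotentialWell F a)
    (hsStar : ∀ s ∈ Ioo 0 a, a < sStar s ∧ F (sStar s) = F s)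
    (hK : ∀ s ∈ Ioi (0:ℝ), s ≠ a → K s = deriv (deriv F) s * F s / (deriv F s)^2)
    (hKmono : MonotoneOn K (Ioi 0)) : ConcaveOn ℝ (Ioo 0 a) sStar := by
  refine concaveOn_of_hasDerivWithinAt2_nonpos (convex_Ioo 0 a)
    (f' := fun s => deriv F s / deriv F (sStar s))
    (f'' := fun s => deriv F s ^ 2 * (K s - K (sStar s)) / (F s * deriv F (sStar s)))
    (fun s hs => (hW.continuousAt_sStar hsStar hs).continuousWithinAt)
    (fun s hs => ?_) (fun s hs => ?_) (fun s hs => ?_) <;> simp only [interior_Ioo] at hs ⊢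
  · exact (hW.hasDerivAt_sStar hsStar hs).hasDerivWithinAt
  · exact (hW.hasDerivAt_deriv_div_deriv_sStar hsStar hK hs).hasDerivWithinAt
  · have ht := (hsStar s hs).1
    have := hKmono hs.1 (hW.zero_lt.trans ht) (hs.2.trans ht).le
    have := hW.pos_of_ne hs.1 hs.2.ne
    have := hW.deriv_pos ht
    exact div_nonpos_of_nonpos_of_nonneg
      (mul_nonpos_of_nonneg_of_nonpos (sq_nonneg _) (by linarith)) (by positivity)

theorem convexOn_sStar (hW : IsPotentialWell F a)
    (hsStar : ∀ s ∈ Ioo 0 a, a < sStar s ∧ F (sStar s) = F s)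
    (hK : ∀ s ∈ Ioi (0:ℝ), s ≠ a → K s = deriv (deriv F) s * F s / (deriv F s)^2)
    (hKanti : AntitoneOn K (Ioi 0)) : ConvexOn ℝ (Ioo 0 a) sStar := by
  refine convexOn_of_hasDerivWithinAt2_nonneg (convex_Ioo 0 a)
    (f' := fun s => deriv F s / deriv F (sStar s))
    (f'' := fun s => deriv F s ^ 2 * (K s - K (sStar s)) / (F s * deriv F (sStar s)))
    (fun s hs => (hW.continuousAt_sStar hsStar hs).continuousWithinAt)
    (fun s hs => ?_) (fun s hs => ?_) (fun s hs => ?_) <;> simp only [interior_Ioo] at hs ⊢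
  · exact (hW.hasDerivAt_sStar hsStar hs).hasDerivWithinAt
  · exact (hW.hasDerivAt_deriv_div_deriv_sStar hsStar hK hs).hasDerivWithinAt
  · have ht := (hsStar s hs).1
    have := hKanti hs.1 (hW.zero_lt.trans ht) (hs.2.trans ht).le
    have := hW.pos_of_ne hs.1 hs.2.ne
    have := hW.deriv_pos ht
    exact div_nonneg (mul_nonneg (sq_nonneg _) (by linarith)) (by positivity)

theorem eventuallyEq_sq_deriv_div (hG : ∀ s ∈ Ioi (0:ℝ), s ≠ a → G s = (deriv F s)^2 / F s)
    (h₀ : 0 < s) (ha : s ≠ a) : G =ᶠ[𝓝 s] fun u => deriv F u ^ 2 / F u :=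
  eventually_of_mem ((isOpen_Ioi.inter isOpen_compl_singleton).mem_nhds ⟨h₀, ha⟩)
    fun u hu => hG u hu.1 hu.2

theorem continuousOn_of_eq_sq_deriv_div (hW : IsPotentialWell F a)
    (hG : ∀ s ∈ Ioi (0:ℝ), s ≠ a → G s = (deriv F s)^2 / F s)
    (hGa : G a = 2 * deriv (deriv F) a) : ContinuousOn G (Ioi 0) := by
  intro s h₀
  refine ContinuousAt.continuousWithinAt ?_
  rcases eq_or_ne s a with rfl | ha
  · rw [← continuousWithinAt_compl_self, ContinuousWithinAt, hGa]
    refine hW.tendsto_sq_deriv_div.congr' ?_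
    filter_upwards [eventually_nhdsWithin_of_eventually_nhds (eventually_gt_nhds h₀),
      self_mem_nhdsWithin] with u hu hua
    exact (hG u hu hua).symm
  · exact (((hW.differentiableAt_deriv h₀).continuousAt.pow 2).div
      (hW.differentiableAt s h₀).continuousAt (hW.pos_of_ne h₀ ha).ne').congr
      (eventuallyEq_sq_deriv_div hG h₀ ha).symm

theorem hasDerivAt_of_eq_sq_deriv_div (hW : IsPotentialWell F a)
    (hK : ∀ s ∈ Ioi (0:ℝ), s ≠ a → K s = deriv (deriv F) s * F s / (deriv F s)^2)
    (hG : ∀ s ∈ Ioi (0:ℝ), s ≠ a → G s = (deriv F s)^2 / F s) (h₀ : 0 < s) (ha : s ≠ a) :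
    HasDerivAt G (deriv F s ^ 3 * (2 * K s - 1) / F s ^ 2) s := by
  have hF := hW.pos_of_ne h₀ ha
  have hK' := hW.mul_sq_deriv_eq hK h₀ ha
  refine ((((hW.hasDerivAt_deriv h₀).fun_pow 2).div (hW.hasDerivAt h₀) hF.ne').congr_deriv
    ?_).congr_of_eventuallyEq (eventuallyEq_sq_deriv_div hG h₀ ha)
  field_simp
  linear_combination (-2 * deriv F s) * hK'

theorem strictMonoOn_of_eq_sq_deriv_div (hW : IsPotentialWell F a)
    (hK : ∀ s ∈ Ioi (0:ℝ), s ≠ a → K s = deriv (deriv F) s * F s / (deriv F s)^2)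
    (hKa : K a = 1/2) (hKmono : StrictMonoOn K (Ioi 0))
    (hG : ∀ s ∈ Ioi (0:ℝ), s ≠ a → G s = (deriv F s)^2 / F s)
    (hGa : G a = 2 * deriv (deriv F) a) : StrictMonoOn G (Ioi 0) := by
  refine strictMonoOn_Ioi_of_deriv_pos hW.zero_lt (hW.continuousOn_of_eq_sq_deriv_div hG hGa)
    fun s h₀ ha => ?_
  rw [(hW.hasDerivAt_of_eq_sq_deriv_div hK hG h₀ ha).deriv]
  have := hW.pos_of_ne h₀ ha
  refine div_pos ?_ (by positivity)
  rcases ha.lt_or_gt with h | h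
  · have : K s < K a := hKmono h₀ hW.zero_lt h
    exact mul_pos_of_neg_of_neg (Odd.pow_neg (by decide) (hW.deriv_neg h₀ h)) (by linarith)
  · have : K a < K s := hKmono hW.zero_lt h₀ h
    exact mul_pos (pow_pos (hW.deriv_pos h) 3) (by linarith)

theorem strictAntiOn_of_eq_sq_deriv_div (hW : IsPotentialWell F a)
    (hK : ∀ s ∈ Ioi (0:ℝ), s ≠ a → K s = deriv (deriv F) s * F s / (deriv F s)^2)
    (hKa : K a = 1/2) (hKanti : StrictAntiOn K (Ioi 0))
    (hG : ∀ s ∈ Ioi (0:ℝ), s ≠ a → G s = (deriv F s)^2 / F s)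
    (hGa : G a = 2 * deriv (deriv F) a) : StrictAntiOn G (Ioi 0) := by
  refine strictAntiOn_Ioi_of_deriv_neg hW.zero_lt (hW.continuousOn_of_eq_sq_deriv_div hG hGa)
    fun s h₀ ha => ?_
  rw [(hW.hasDerivAt_of_eq_sq_deriv_div hK hG h₀ ha).deriv]
  have := hW.pos_of_ne h₀ ha
  refine div_neg_of_neg_of_pos ?_ (by positivity)
  rcases ha.lt_or_gt with h | h
  · have : K a < K s := hKanti h₀ hW.zero_lt h
    exact mul_neg_of_neg_of_pos (Odd.pow_neg (by decide) (hW.deriv_neg h₀ h)) (by linarith)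
  · have : K s < K a := hKanti hW.zero_lt h₀ h
    exact mul_neg_of_pos_of_neg (pow_pos (hW.deriv_pos h) 3) (by linarith)

theorem pos_of_eq_deriv_deriv_mul_div (hW : IsPotentialWell F a)
    (hK : ∀ s ∈ Ioi (0:ℝ), s ≠ a → K s = deriv (deriv F) s * F s / (deriv F s)^2)
    (hKa : K a = 1/2) (h₀ : 0 < s) : 0 < K s := by
  rcases eq_or_ne s a with rfl | ha
  · norm_num [hKa]
  · rw [hK s h₀ ha]
    have := hW.deriv_deriv_pos s h₀
    have := hW.pos_of_ne h₀ ha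
    have := hW.deriv_ne_zero h₀ ha
    positivity

theorem pos_of_eq_sq_deriv_div (hW : IsPotentialWell F a)
    (hG : ∀ s ∈ Ioi (0:ℝ), s ≠ a → G s = (deriv F s)^2 / F s)
    (hGa : G a = 2 * deriv (deriv F) a) (h₀ : 0 < s) : 0 < G s := by
  rcases eq_or_ne s a with rfl | ha
  · have := hW.deriv_deriv_pos s h₀
    rw [hGa]
    positivity
  · rw [hG s h₀ ha]
    have := hW.pos_of_ne h₀ ha
    have := hW.deriv_ne_zero h₀ ha
    positivity

theorem deriv_deriv_eqOn_mul (hW : IsPotentialWell F a)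
    (hK : ∀ s ∈ Ioi (0:ℝ), s ≠ a → K s = deriv (deriv F) s * F s / (deriv F s)^2)
    (hKa : K a = 1/2) (hG : ∀ s ∈ Ioi (0:ℝ), s ≠ a → G s = (deriv F s)^2 / F s)
    (hGa : G a = 2 * deriv (deriv F) a) : EqOn (deriv (deriv F)) (K * G) (Ioi 0) := by
  intro s h₀
  rcases eq_or_ne s a with rfl | ha
  · rw [Pi.mul_apply, hKa, hGa]
    ring
  · have := hW.pos_of_ne h₀ ha
    have := hW.deriv_ne_zero h₀ ha
    rw [Pi.mul_apply, hK s h₀ ha, hG s h₀ ha]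
    field_simp

theorem convexOn_deriv (hW : IsPotentialWell F a)
    (hK : ∀ s ∈ Ioi (0:ℝ), s ≠ a → K s = deriv (deriv F) s * F s / (deriv F s)^2)
    (hKa : K a = 1/2) (hG : ∀ s ∈ Ioi (0:ℝ), s ≠ a → G s = (deriv F s)^2 / F s)
    (hGa : G a = 2 * deriv (deriv F) a) (hKmono : MonotoneOn K (Ioi 0))
    (hGmono : MonotoneOn G (Ioi 0)) : ConvexOn ℝ (Ioi 0) (deriv F) := by
  have hmono : MonotoneOn (deriv (deriv F)) (Ioi 0) :=
    (hKmono.mul hGmono (fun s hs => (hW.pos_of_eq_deriv_deriv_mul_div hK hKa hs).le)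
      (fun s hs => (hW.pos_of_eq_sq_deriv_div hG hGa hs).le)).congr
      (hW.deriv_deriv_eqOn_mul hK hKa hG hGa).symm
  refine MonotoneOn.convexOn_of_deriv (convex_Ioi 0) hW.continuousOn_deriv ?_ ?_ <;>
    rw [interior_Ioi]
  · exact fun s hs => (hW.differentiableAt_deriv hs).differentiableWithinAt
  · exact hmono

theorem concaveOn_deriv (hW : IsPotentialWell F a)
    (hK : ∀ s ∈ Ioi (0:ℝ), s ≠ a → K s = deriv (deriv F) s * F s / (deriv F s)^2)
    (hKa : K a = 1/2) (hG : ∀ s ∈ Ioi (0:ℝ), s ≠ a → G s = (deriv F s)^2 / F s)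
    (hGa : G a = 2 * deriv (deriv F) a) (hKanti : AntitoneOn K (Ioi 0))
    (hGanti : AntitoneOn G (Ioi 0)) : ConcaveOn ℝ (Ioi 0) (deriv F) := by
  have hanti : AntitoneOn (K * G) (Ioi 0) := fun s hs t ht hst =>
    mul_le_mul (hKanti hs ht hst) (hGanti hs ht hst)
      (hW.pos_of_eq_sq_deriv_div hG hGa ht).le (hW.pos_of_eq_deriv_deriv_mul_div hK hKa hs).le
  refine AntitoneOn.concaveOn_of_deriv (convex_Ioi 0) hW.continuousOn_deriv ?_ ?_ <;>
    rw [interior_Ioi]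
  · exact fun s hs => (hW.differentiableAt_deriv hs).differentiableWithinAt
  · exact hanti.congr (hW.deriv_deriv_eqOn_mul hK hKa hG hGa).symm

end IsPotentialWell

theorem stmt6_general (f F : ℝ → ℝ) (sf : ℝ) (sStar : ℝ → ℝ)
    (hF : ∀ s ∈ Set.Ioi (0:ℝ), HasDerivAt F (s * f s - 1) s)
    (hFpp : ∀ s ∈ Set.Ioi (0:ℝ), 0 < deriv (deriv F) s)
    (hsfpos : 0 < sf) (hsf1 : sf * f sf = 1) (hFsf : F sf = 0)
    (hsStar : ∀ s ∈ Set.Ioo 0 sf, sf < sStar s ∧ F (sStar s) = F s)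
    (K : ℝ → ℝ)
    (hK : ∀ s ∈ Set.Ioi (0:ℝ), s ≠ sf → K s = deriv (deriv F) s * F s / (deriv F s)^2)
    (hKsf : K sf = 1/2) :
    (StrictMonoOn K (Set.Ioi 0) →
      ConcaveOn ℝ (Set.Ioo 0 sf) sStar ∧
      (∀ G : ℝ → ℝ, (∀ s ∈ Set.Ioi (0:ℝ), s ≠ sf → G s = (deriv F s)^2 / F s) →
        G sf = 2 * deriv (deriv F) sf → StrictMonoOn G (Set.Ioi 0)) ∧
      ConvexOn ℝ (Set.Ioi 0) (deriv F)) ∧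
    (StrictAntiOn K (Set.Ioi 0) →
      ConvexOn ℝ (Set.Ioo 0 sf) sStar ∧
      (∀ G : ℝ → ℝ, (∀ s ∈ Set.Ioi (0:ℝ), s ≠ sf → G s = (deriv F s)^2 / F s) →
        G sf = 2 * deriv (deriv F) sf → StrictAntiOn G (Set.Ioi 0)) ∧
      ConcaveOn ℝ (Set.Ioi 0) (deriv F)) := by
  have hW : IsPotentialWell F sf :=
    ⟨hsfpos, fun s hs => (hF s hs).differentiableAt, hFpp,
      by rw [(hF sf hsfpos).deriv, hsf1, sub_self], hFsf⟩
  obtain ⟨G, hG, hGsf⟩ : ∃ G : ℝ → ℝ,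
      (∀ s ∈ Ioi (0:ℝ), s ≠ sf → G s = (deriv F s)^2 / F s) ∧ G sf = 2 * deriv (deriv F) sf :=
    ⟨Function.update (fun s => deriv F s ^ 2 / F s) sf (2 * deriv (deriv F) sf),
      fun s _ hs => Function.update_of_ne hs _ _, Function.update_self _ _ _⟩
  refine ⟨fun hKmono => ⟨hW.concaveOn_sStar hsStar hK hKmono.monotoneOn,
      fun G' hG' hG'sf => hW.strictMonoOn_of_eq_sq_deriv_div hK hKsf hKmono hG' hG'sf,
      hW.convexOn_deriv hK hKsf hG hGsf hKmono.monotoneOn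
        (hW.strictMonoOn_of_eq_sq_deriv_div hK hKsf hKmono hG hGsf).monotoneOn⟩,
    fun hKanti => ⟨hW.convexOn_sStar hsStar hK hKanti.antitoneOn,
      fun G' hG' hG'sf => hW.strictAntiOn_of_eq_sq_deriv_div hK hKsf hKanti hG' hG'sf,
      hW.concaveOn_deriv hK hKsf hG hGsf hKanti.antitoneOn
        (hW.strictAntiOn_of_eq_sq_deriv_div hK hKsf hKanti hG hGsf).antitoneOn⟩⟩

/-- Proposition 4.7: for f in the class F* (f > 0), with K = F″·F/(F′)² (extended by 1/2
at s_f): if K is increasing on (0,∞) then s ↦ s* is concave on (0,s_f), (F′)²/F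
(extended by 2F″(s_f) at s_f) is increasing on (0,∞), and F′ is convex on (0,∞);
if K is decreasing, the respective conclusions are convex / decreasing / concave. -/
theorem stmt6 (f F : ℝ → ℝ) (sf : ℝ) (sStar ω : ℝ → ℝ)
    (hf : ContDiffOn ℝ (⊤ : ℕ∞) f (Set.Ioi 0))
    (hfpos : ∀ s ∈ Set.Ioi (0:ℝ), 0 < f s)
    (hfderiv : ∀ s ∈ Set.Ioi (0:ℝ), deriv f s ≠ 0)
    (hF : ∀ s ∈ Set.Ioi (0:ℝ), HasDerivAt F (s * f s - 1) s)
    (hFpp : ∀ s ∈ Set.Ioi (0:ℝ), 0 < deriv (deriv F) s)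
    (L0 Linf : EReal)
    (hL0 : Filter.Tendsto (fun s => ((s * f s : ℝ) : EReal)) (nhdsWithin 0 (Set.Ioi 0)) (nhds L0))
    (hL0lt : L0 < 1)
    (hLinf : Filter.Tendsto (fun s => ((s * f s : ℝ) : EReal)) Filter.atTop (nhds Linf))
    (hLinfgt : 1 < Linf)
    (hsfpos : 0 < sf) (hsf1 : sf * f sf = 1) (hFsf : F sf = 0)
    (hsStar : ∀ s ∈ Set.Ioo 0 sf, sf < sStar s ∧ F (sStar s) = F s)
    (hω : ∀ s ∈ Set.Ioo 0 sf, ω s = (1/Real.pi) * ∫ u in s..(sStar s),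
      u * f u / (Real.sqrt (F s - F u) * Real.sqrt (2*u + F u - F s)))
    (K : ℝ → ℝ)
    (hK : ∀ s ∈ Set.Ioi (0:ℝ), s ≠ sf → K s = deriv (deriv F) s * F s / (deriv F s)^2)
    (hKsf : K sf = 1/2) :
    (StrictMonoOn K (Set.Ioi 0) →
      ConcaveOn ℝ (Set.Ioo 0 sf) sStar ∧
      (∀ G : ℝ → ℝ, (∀ s ∈ Set.Ioi (0:ℝ), s ≠ sf → G s = (deriv F s)^2 / F s) →
        G sf = 2 * deriv (deriv F) sf → StrictMonoOn G (Set.Ioi 0)) ∧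
      ConvexOn ℝ (Set.Ioi 0) (deriv F)) ∧
    (StrictAntiOn K (Set.Ioi 0) →
      ConvexOn ℝ (Set.Ioo 0 sf) sStar ∧
      (∀ G : ℝ → ℝ, (∀ s ∈ Set.Ioi (0:ℝ), s ≠ sf → G s = (deriv F s)^2 / F s) →
        G sf = 2 * deriv (deriv F) sf → StrictAntiOn G (Set.Ioi 0)) ∧
      ConcaveOn ℝ (Set.Ioi 0) (deriv F)) :=
  stmt6_general f F sf sStar hF hFpp hsfpos hsf1 hFsf hsStar K hK hKsf
end

section
/- For all real numbers a > 0 and b > 0: a·min{(b+1)^{1/b}/2, 1} ≤ (((a+1)^{b+1} − 1)/a)^{1/b} − (b+1)^{1/b} ≤ a·max{(b+1)^{1/b}/2, 1}. Equivalently, for 0 < b ≤ 1 one has a ≤ (((a+1)^{b+1} − 1)/a)^{1/b} − (b+1)^{1/b} ≤ a·(b+1)^{1/b}/2, while for b ≥ 1 both of these inequalities are reversed. -/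
open Real Set

/-!
Put `c = (b+1)^(1/b)`, so that `c^b = b+1`. Taking `b`-th powers, the four bounds compare
`(a+1)^(b+1) - 1` with `a (c+a)^b` and with `a (c + c a/2)^b`. All three vanish at `a = 0`,
so it suffices to compare derivatives. For `b ≤ 1` the function `s ↦ s^b` is concave. The
derivative of `a (c+a)^b` is `(c+a)^b (1 + b t)` with `t = a/(c+a) ∈ [0,1]`, while that of
`(a+1)^(b+1)` is `(c+a)^b (1 + (c-1) t)^b`; the chord of `s^b` between `1` and `c` gives
`1 + b t ≤ (1 + (c-1) t)^b`. The derivative of `a (c + c a/2)^b` is `b+1` times the tangent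
of `s^b` at `1 + a/2`, evaluated at `1 + a`, which dominates `(1+a)^b`. For `b ≥ 1` convexity
reverses every inequality. Bernoulli's inequality gives `c ≥ 2` exactly when `b ≤ 1`, which
turns the `min`/`max` form into the two cases.
-/

lemma le_of_hasDerivAt_le_of_nonneg {f g f' g' : ℝ → ℝ}
    (hf : ∀ x, 0 ≤ x → HasDerivAt f (f' x) x) (hg : ∀ x, 0 ≤ x → HasDerivAt g (g' x) x)
    (h₀ : f 0 ≤ g 0) (hderiv : ∀ x, 0 ≤ x → f' x ≤ g' x) {a : ℝ} (ha : 0 ≤ a) :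
    f a ≤ g a :=
  image_le_of_deriv_right_le_deriv_boundary
    (fun x hx => (hf x hx.1).continuousAt.continuousWithinAt)
    (fun x hx => (hf x hx.1).hasDerivWithinAt) h₀
    (fun x hx => (hg x hx.1).continuousAt.continuousWithinAt)
    (fun x hx => (hg x hx.1).hasDerivWithinAt) (fun x hx => hderiv x hx.1) ⟨ha, le_rfl⟩

lemma hasDerivAt_add_one_rpow_sub_one (b : ℝ) {x : ℝ} (hx : x + 1 ≠ 0) :
    HasDerivAt (fun x => (x + 1) ^ (b + 1) - 1) ((b + 1) * (x + 1) ^ b) x := by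
  simpa using (((hasDerivAt_id x).add_const 1).rpow_const (p := b + 1) (Or.inl hx)).sub_const 1

lemma hasDerivAt_mul_add_mul_rpow (b c l : ℝ) {x : ℝ} (hx : c + l * x ≠ 0) :
    HasDerivAt (fun x => x * (c + l * x) ^ b)
      ((c + l * x) ^ b + b * l * x * (c + l * x) ^ (b - 1)) x := by
  refine ((hasDerivAt_id' x).mul
    ((((hasDerivAt_id' x).const_mul l).const_add c).rpow_const (p := b) (Or.inl hx))).congr_deriv ?_
  ring

section Convexity

variable {b : ℝ}

lemma rpow_le_rpow_add_mul_sub_of_le_one (hb₀ : 0 ≤ b) (hb₁ : b ≤ 1) {u w : ℝ}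
    (hu : 0 < u) (hw : 0 ≤ w) : w ^ b ≤ u ^ b + b * u ^ (b - 1) * (w - u) := by
  have hs : -1 ≤ (w - u) / u := by rw [le_div_iff₀ hu]; linarith
  calc w ^ b = u ^ b * (1 + (w - u) / u) ^ b := by
        rw [← mul_rpow hu.le (by linarith)]; congr 1; field_simp; ring
    _ ≤ u ^ b * (1 + b * ((w - u) / u)) := by
        gcongr; exact rpow_one_add_le_one_add_mul_self hs hb₀ hb₁
    _ = u ^ b + b * u ^ (b - 1) * (w - u) := by rw [rpow_sub_one hu.ne']; field_simp

lemma rpow_add_mul_sub_le_rpow_of_one_le (hb : 1 ≤ b) {u w : ℝ} (hu : 0 < u) (hw : 0 ≤ w) :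
    u ^ b + b * u ^ (b - 1) * (w - u) ≤ w ^ b := by
  have hs : -1 ≤ (w - u) / u := by rw [le_div_iff₀ hu]; linarith
  calc u ^ b + b * u ^ (b - 1) * (w - u) = u ^ b * (1 + b * ((w - u) / u)) := by
        rw [rpow_sub_one hu.ne']; field_simp
    _ ≤ u ^ b * (1 + (w - u) / u) ^ b := by
        gcongr; exact one_add_mul_self_le_rpow_one_add hs hb
    _ = w ^ b := by
        rw [← mul_rpow hu.le (by linarith)]; congr 1; field_simp; ring

lemma one_add_mul_le_rpow_of_le_one (hb₀ : 0 ≤ b) (hb₁ : b ≤ 1) {c t : ℝ} (hc : 0 ≤ c)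
    (ht₀ : 0 ≤ t) (ht₁ : t ≤ 1) : 1 + (c ^ b - 1) * t ≤ (1 + (c - 1) * t) ^ b := by
  have h := (concaveOn_rpow hb₀ hb₁).2 (mem_Ici.2 zero_le_one) (mem_Ici.2 hc)
    (sub_nonneg.2 ht₁) ht₀ (sub_add_cancel 1 t)
  simp only [smul_eq_mul, one_rpow, mul_one] at h
  rw [show 1 + (c - 1) * t = 1 - t + t * c by ring]
  linarith

lemma rpow_le_one_add_mul_of_one_le (hb : 1 ≤ b) {c t : ℝ} (hc : 0 ≤ c)
    (ht₀ : 0 ≤ t) (ht₁ : t ≤ 1) : (1 + (c - 1) * t) ^ b ≤ 1 + (c ^ b - 1) * t := by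
  have h := (convexOn_rpow hb).2 (mem_Ici.2 zero_le_one) (mem_Ici.2 hc)
    (sub_nonneg.2 ht₁) ht₀ (sub_add_cancel 1 t)
  simp only [smul_eq_mul, one_rpow, mul_one] at h
  rw [show 1 + (c - 1) * t = 1 - t + t * c by ring]
  linarith

end Convexity

section Comparison

variable {a b c : ℝ}

lemma add_rpow_add_mul_rpow_sub_one_eq {x : ℝ} (hx : 0 < c + x) :
    (c + x) ^ b + b * x * (c + x) ^ (b - 1) = (c + x) ^ b * (1 + b * (x / (c + x))) := by
  rw [rpow_sub_one hx.ne']; field_simp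

lemma add_one_rpow_eq_of_rpow_eq (hc : 0 < c) (hcb : c ^ b = b + 1) {x : ℝ} (hx : 0 ≤ x) :
    (b + 1) * (x + 1) ^ b = (c + x) ^ b * (1 + (c - 1) * (x / (c + x))) ^ b := by
  have hcx : 0 < c + x := by positivity
  rw [show 1 + (c - 1) * (x / (c + x)) = c * (x + 1) / (c + x) by field_simp; ring,
    div_rpow (by positivity) hcx.le, mul_rpow hc.le (by positivity), hcb]
  field_simp

lemma add_half_mul_rpow_add_mul_rpow_sub_one_eq (hc : 0 < c) (hcb : c ^ b = b + 1) {x : ℝ}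
    (hx : 0 ≤ x) :
    (c + c / 2 * x) ^ b + b * (c / 2) * x * (c + c / 2 * x) ^ (b - 1) =
      (b + 1) * ((1 + x / 2) ^ b + b * (1 + x / 2) ^ (b - 1) * ((x + 1) - (1 + x / 2))) := by
  rw [show c + c / 2 * x = c * (1 + x / 2) by ring, mul_rpow hc.le (by positivity),
    mul_rpow hc.le (by positivity), rpow_sub_one hc.ne', hcb]
  field_simp
  ring

lemma mul_add_rpow_le_of_le_one (hb₀ : 0 ≤ b) (hb₁ : b ≤ 1) (hc : 0 < c)
    (hcb : c ^ b = b + 1) (ha : 0 ≤ a) : a * (c + a) ^ b ≤ (a + 1) ^ (b + 1) - 1 := by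
  refine le_of_hasDerivAt_le_of_nonneg
    (fun x hx => by simpa using hasDerivAt_mul_add_mul_rpow b c 1 (x := x) (by positivity))
    (fun x hx => hasDerivAt_add_one_rpow_sub_one b (x := x) (by positivity)) (by simp) ?_ ha
  intro x hx
  have hcx : 0 < c + x := by positivity
  have chord := one_add_mul_le_rpow_of_le_one hb₀ hb₁ hc.le (t := x / (c + x)) (by positivity)
    (div_le_one_of_le₀ (by linarith) hcx.le)
  rw [hcb, add_sub_cancel_right] at chord
  rw [add_rpow_add_mul_rpow_sub_one_eq hcx, add_one_rpow_eq_of_rpow_eq hc hcb hx]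
  gcongr

lemma le_mul_add_rpow_of_one_le (hb : 1 ≤ b) (hc : 0 < c) (hcb : c ^ b = b + 1) (ha : 0 ≤ a) :
    (a + 1) ^ (b + 1) - 1 ≤ a * (c + a) ^ b := by
  refine le_of_hasDerivAt_le_of_nonneg
    (fun x hx => hasDerivAt_add_one_rpow_sub_one b (x := x) (by positivity))
    (fun x hx => by simpa using hasDerivAt_mul_add_mul_rpow b c 1 (x := x) (by positivity))
    (by simp) ?_ ha
  intro x hx
  have hcx : 0 < c + x := by positivity
  have chord := rpow_le_one_add_mul_of_one_le hb hc.le (t := x / (c + x)) (by positivity)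
    (div_le_one_of_le₀ (by linarith) hcx.le)
  rw [hcb, add_sub_cancel_right] at chord
  rw [add_rpow_add_mul_rpow_sub_one_eq hcx, add_one_rpow_eq_of_rpow_eq hc hcb hx]
  gcongr

lemma le_mul_add_half_mul_rpow_of_le_one (hb₀ : 0 ≤ b) (hb₁ : b ≤ 1) (hc : 0 < c)
    (hcb : c ^ b = b + 1) (ha : 0 ≤ a) : (a + 1) ^ (b + 1) - 1 ≤ a * (c + c / 2 * a) ^ b := by
  refine le_of_hasDerivAt_le_of_nonneg
    (fun x hx => hasDerivAt_add_one_rpow_sub_one b (x := x) (by positivity))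
    (fun x hx => hasDerivAt_mul_add_mul_rpow b c (c / 2) (x := x) (by positivity))
    (by simp) ?_ ha
  intro x hx
  rw [add_half_mul_rpow_add_mul_rpow_sub_one_eq hc hcb hx]
  gcongr
  exact rpow_le_rpow_add_mul_sub_of_le_one hb₀ hb₁ (by positivity) (by positivity)

lemma mul_add_half_mul_rpow_le_of_one_le (hb : 1 ≤ b) (hc : 0 < c) (hcb : c ^ b = b + 1)
    (ha : 0 ≤ a) : a * (c + c / 2 * a) ^ b ≤ (a + 1) ^ (b + 1) - 1 := by
  refine le_of_hasDerivAt_le_of_nonneg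
    (fun x hx => hasDerivAt_mul_add_mul_rpow b c (c / 2) (x := x) (by positivity))
    (fun x hx => hasDerivAt_add_one_rpow_sub_one b (x := x) (by positivity))
    (by simp) ?_ ha
  intro x hx
  rw [add_half_mul_rpow_add_mul_rpow_sub_one_eq hc hcb hx]
  gcongr
  exact rpow_add_mul_sub_le_rpow_of_one_le hb (by positivity) (by positivity)

end Comparison

section Roots

variable {a b : ℝ}

lemma le_rpow_one_div_iff_mul_rpow_le (ha : 0 < a) (hb : 0 < b) {y z : ℝ} (hy : 0 ≤ y)
    (hz : 0 ≤ z) : y ≤ (z / a) ^ (1 / b) ↔ a * y ^ b ≤ z := by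
  rw [one_div, le_rpow_inv_iff_of_pos hy (div_nonneg hz ha.le) hb, le_div_iff₀ ha, mul_comm]

lemma rpow_one_div_le_iff_le_mul_rpow (ha : 0 < a) (hb : 0 < b) {y z : ℝ} (hy : 0 ≤ y)
    (hz : 0 ≤ z) : (z / a) ^ (1 / b) ≤ y ↔ z ≤ a * y ^ b := by
  rw [one_div, rpow_inv_le_iff_of_pos (div_nonneg hz ha.le) hy hb, div_le_iff₀ ha, mul_comm]

lemma two_le_rpow_one_div_of_le_one (hb : 0 < b) (hb₁ : b ≤ 1) : 2 ≤ (b + 1) ^ (1 / b) := by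
  rw [one_div, le_rpow_inv_iff_of_pos zero_le_two (by positivity) hb]
  have := rpow_one_add_le_one_add_mul_self (s := 1) (by norm_num) hb.le hb₁
  norm_num at this
  linarith

lemma rpow_one_div_le_two_of_one_le (hb : 1 ≤ b) : (b + 1) ^ (1 / b) ≤ 2 := by
  rw [one_div, rpow_inv_le_iff_of_pos (by positivity) zero_le_two (by positivity)]
  have := one_add_mul_self_le_rpow_one_add (s := 1) (by norm_num) hb
  norm_num at this
  linarith

end Roots

/-- Inequality (5.5): for a, b > 0,
a·min{(b+1)^{1/b}/2, 1} ≤ (((a+1)^{b+1} − 1)/a)^{1/b} − (b+1)^{1/b} ≤ a·max{(b+1)^{1/b}/2, 1};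
equivalently, for 0 < b ≤ 1 the middle quantity lies between a and a·(b+1)^{1/b}/2,
while for b ≥ 1 both of these inequalities are reversed. -/
theorem stmt15 (a b : ℝ) (ha : 0 < a) (hb : 0 < b) :
    (a * min ((b+1) ^ (1/b) / 2) 1
        ≤ (((a+1) ^ (b+1) - 1)/a) ^ (1/b) - (b+1) ^ (1/b) ∧
      (((a+1) ^ (b+1) - 1)/a) ^ (1/b) - (b+1) ^ (1/b)
        ≤ a * max ((b+1) ^ (1/b) / 2) 1) ∧
    (b ≤ 1 →
      a ≤ (((a+1) ^ (b+1) - 1)/a) ^ (1/b) - (b+1) ^ (1/b) ∧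
      (((a+1) ^ (b+1) - 1)/a) ^ (1/b) - (b+1) ^ (1/b) ≤ a * ((b+1) ^ (1/b) / 2)) ∧
    (1 ≤ b →
      a * ((b+1) ^ (1/b) / 2) ≤ (((a+1) ^ (b+1) - 1)/a) ^ (1/b) - (b+1) ^ (1/b) ∧
      (((a+1) ^ (b+1) - 1)/a) ^ (1/b) - (b+1) ^ (1/b) ≤ a) := by
  have hc_two_le : b ≤ 1 → 2 ≤ (b + 1) ^ (1 / b) := two_le_rpow_one_div_of_le_one hb
  have hc_le_two : 1 ≤ b → (b + 1) ^ (1 / b) ≤ 2 := rpow_one_div_le_two_of_one_le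
  have hc : 0 < (b + 1) ^ (1 / b) := by positivity
  have hcb : ((b + 1) ^ (1 / b)) ^ b = b + 1 := by
    rw [one_div, rpow_inv_rpow (by positivity) hb.ne']
  have hz : 0 ≤ (a + 1) ^ (b + 1) - 1 := sub_nonneg.2 (one_le_rpow (by linarith) (by linarith))
  have lower {y : ℝ} (hy : 0 ≤ y) := le_rpow_one_div_iff_mul_rpow_le ha hb hy hz
  have upper {y : ℝ} (hy : 0 ≤ y) := rpow_one_div_le_iff_le_mul_rpow ha hb hy hz
  set c := (b + 1) ^ (1 / b)
  set R := (((a + 1) ^ (b + 1) - 1) / a) ^ (1 / b)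
  have small (h : b ≤ 1) : a ≤ R - c ∧ R - c ≤ a * (c / 2) := by
    have hlo := (lower (by positivity)).2 (mul_add_rpow_le_of_le_one hb.le h hc hcb ha.le)
    have hup := (upper (by positivity)).2 (le_mul_add_half_mul_rpow_of_le_one hb.le h hc hcb ha.le)
    constructor <;> linarith
  have large (h : 1 ≤ b) : a * (c / 2) ≤ R - c ∧ R - c ≤ a := by
    have hlo := (lower (by positivity)).2 (mul_add_half_mul_rpow_le_of_one_le h hc hcb ha.le)
    have hup := (upper (by positivity)).2 (le_mul_add_rpow_of_one_le h hc hcb ha.le)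
    constructor <;> linarith
  refine ⟨?_, small, large⟩
  rcases le_total b 1 with h | h
  · rw [min_eq_right (by linarith [hc_two_le h]), max_eq_left (by linarith [hc_two_le h])]
    exact ⟨by linarith [(small h).1], (small h).2⟩
  · rw [min_eq_left (by linarith [hc_le_two h]), max_eq_right (by linarith [hc_le_two h])]
    exact ⟨(large h).1, by linarith [(large h).2]⟩
end

section
/- For δ = 3 one has G(s) = (s − 1/s)² and s* = 1/s, and for every 0 < s < 1: (1/π)·∫_s^{1/s} du/√((s − 1/s)² − (u − 1/u)²) = 1/2; that is, ν_{f_3}(s) = 1/2 for all 0 < s < 1 (the corresponding center is isochronous). -/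
open Set Filter Topology MeasureTheory intervalIntegral

/-!
For `δ = 3`, `G(s) = (s - 1/s)²`, and since `u ↦ u - 1/u` is increasing on `(0, ∞)` the partner of
`s ∈ (0, 1)` is `s* = 1/s`. Multiplying out, `(s - 1/s)² - (u - 1/u)² = (u² - s²)(s⁻² - u²)/u²`, so the
substitution `x = u²` turns `ν(s)` into `(1/2π) ∫ dx / √((x - s²)(s⁻² - x))` over `[s², s⁻²]`, an
arcsine integral equal to `π` whatever the endpoints.
-/

open Real

lemma sq_add_rpow_neg_two_sub_two {s : ℝ} (hs : 0 < s) :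
    s ^ 2 + (2 / ((3:ℝ) - 1)) * s ^ ((1:ℝ) - 3) - ((3:ℝ) + 1) / ((3:ℝ) - 1) = (s - 1 / s) ^ 2 := by
  rw [show (1:ℝ) - 3 = ((-2 : ℤ) : ℝ) by norm_num, rpow_intCast, zpow_neg, zpow_ofNat]
  field_simp
  ring

lemma strictMonoOn_sub_one_div : StrictMonoOn (fun u : ℝ => u - 1 / u) (Ioi 0) := by
  intro u hu v _ huv
  have := one_div_lt_one_div_of_lt (mem_Ioi.mp hu) huv
  simp only
  linarith

lemma eq_one_div_of_sub_one_div_sq_eq {s t : ℝ} (hs : 0 < s) (hs1 : s < 1) (ht : 1 < t)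
    (h : (t - 1 / t) ^ 2 = (s - 1 / s) ^ 2) : t = 1 / s := by
  have ht0 : 0 < t := one_pos.trans ht
  have hs' : 1 < 1 / s := by rw [lt_div_iff₀ hs]; linarith
  have hpos : ∀ {v : ℝ}, 1 < v → 0 ≤ v - 1 / v := fun {v} hv => by
    have := one_div_lt_one_div_of_lt one_pos hv
    linarith
  apply strictMonoOn_sub_one_div.injOn (mem_Ioi.mpr ht0) (mem_Ioi.mpr (one_pos.trans hs'))
  rw [← pow_left_inj₀ (hpos ht) (hpos hs') two_ne_zero, h, one_div_one_div]
  ring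

lemma hasDerivAt_arcsin_two_mul_sq_sub_div {a b u : ℝ} (hau : a < u ^ 2) (hub : u ^ 2 < b) :
    HasDerivAt (fun v => arcsin ((2 * v ^ 2 - a - b) / (b - a)) / 2)
      (u / √((u ^ 2 - a) * (b - u ^ 2))) u := by
  have hba : 0 < b - a := by linarith
  set X := (2 * u ^ 2 - a - b) / (b - a)
  set P := (u ^ 2 - a) * (b - u ^ 2)
  have hP : 0 < P := mul_pos (by linarith) (by linarith)
  have hX : -1 < X ∧ X < 1 := by
    constructor
    · rw [lt_div_iff₀ hba]; linarith
    · rw [div_lt_one hba]; linarith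
  have hsqrt : √(1 - X ^ 2) = 2 * √P / (b - a) := by
    have h1 : 1 - X ^ 2 = (2 * √P / (b - a)) ^ 2 := by
      rw [div_pow (2 * √P), mul_pow, sq_sqrt hP.le]
      simp only [X, P]
      field_simp
      ring
    rw [h1, sqrt_sq (by positivity)]
  have hinner : HasDerivAt (fun v : ℝ => (2 * v ^ 2 - a - b) / (b - a)) (4 * u / (b - a)) u := by
    refine (((((hasDerivAt_pow 2 u).const_mul 2).sub_const a).sub_const b).div_const
      (b - a)).congr_deriv ?_
    norm_num
    ring
  refine (((hasDerivAt_arcsin hX.1.ne' hX.2.ne).comp u hinner).div_const 2).congr_deriv ?_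
  rw [hsqrt]
  field_simp
  ring

theorem integral_div_sqrt_sq_sub_mul_sub_sq {a b : ℝ} (ha : 0 ≤ a) (hab : a < b) :
    ∫ u in √a..√b, u / √((u ^ 2 - a) * (b - u ^ 2)) = π / 2 := by
  have hle : √a ≤ √b := sqrt_le_sqrt hab.le
  have hcont : Continuous fun v : ℝ => arcsin ((2 * v ^ 2 - a - b) / (b - a)) / 2 := by
    fun_prop
  have hderiv : ∀ u ∈ Ioo √a √b,
      HasDerivAt (fun v => arcsin ((2 * v ^ 2 - a - b) / (b - a)) / 2)
        (u / √((u ^ 2 - a) * (b - u ^ 2))) u := by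
    rintro u ⟨hau, hub⟩
    have hu : 0 < u := (sqrt_nonneg a).trans_lt hau
    exact hasDerivAt_arcsin_two_mul_sq_sub_div ((sqrt_lt' hu).mp hau) ((lt_sqrt hu.le).mp hub)
  have hint : IntervalIntegrable (fun u => u / √((u ^ 2 - a) * (b - u ^ 2))) volume √a √b := by
    refine intervalIntegrable_deriv_of_nonneg hcont.continuousOn ?_ ?_
    · rwa [min_eq_left hle, max_eq_right hle]
    · rw [min_eq_left hle, max_eq_right hle]
      exact fun u hu => div_nonneg ((sqrt_nonneg a).trans hu.1.le) (sqrt_nonneg _)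
  rw [integral_eq_sub_of_hasDerivAt_of_le hle hcont.continuousOn hderiv hint,
    sq_sqrt ha, sq_sqrt (ha.trans hab.le),
    show (2 * b - a - b) / (b - a) = 1 by rw [div_eq_iff (sub_pos.2 hab).ne']; ring,
    show (2 * a - a - b) / (b - a) = -1 by rw [div_eq_iff (sub_pos.2 hab).ne']; ring, arcsin_one, arcsin_neg_one]
  ring

lemma one_div_sqrt_sub_one_div_sq_sub_sq {s u : ℝ} (hs : 0 < s) (hu : 0 < u) :
    1 / √((s - 1 / s) ^ 2 - (u - 1 / u) ^ 2) = u / √((u ^ 2 - s ^ 2) * (1 / s ^ 2 - u ^ 2)) := by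
  have h : (s - 1 / s) ^ 2 - (u - 1 / u) ^ 2 = (u ^ 2 - s ^ 2) * (1 / s ^ 2 - u ^ 2) / u ^ 2 := by
    field_simp
    ring
  rw [h, sqrt_div' _ (sq_nonneg u), sqrt_sq hu.le, one_div_div]

lemma integral_one_div_sqrt_sub_one_div_sq_sub_sq {s : ℝ} (hs : 0 < s) (hs1 : s < 1) :
    ∫ u in s..(1 / s), 1 / √((s - 1 / s) ^ 2 - (u - 1 / u) ^ 2) = π / 2 := by
  have hss : s ^ 2 < 1 / s ^ 2 := by
    rw [lt_div_iff₀ (by positivity)]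
    nlinarith [pow_lt_one₀ hs.le hs1 (n := 4) (by norm_num)]
  have hlim : s = √(s ^ 2) ∧ 1 / s = √(1 / s ^ 2) := by
    rw [sqrt_sq hs.le, sqrt_div' _ (sq_nonneg s), sqrt_one, sqrt_sq hs.le]
    exact ⟨rfl, rfl⟩
  rw [← integral_div_sqrt_sq_sub_mul_sub_sq (sq_nonneg s) hss, ← hlim.1, ← hlim.2]
  have hle : s ≤ 1 / s := by rw [le_div_iff₀ hs]; nlinarith
  refine integral_congr fun u hu => one_div_sqrt_sub_one_div_sq_sub_sq hs ?_
  rw [uIcc_of_le hle] at hu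
  exact hs.trans_le hu.1

/-- For δ = 3 one has G(s) = (s − 1/s)², s* = 1/s, and ν_{f₃}(s) = 1/2 for every
0 < s < 1, given explicitly by (1/π)∫_s^{1/s} du/√((s − 1/s)² − (u − 1/u)²) = 1/2:
the corresponding center is isochronous. -/
theorem stmt19 (G sStar ν : ℝ → ℝ)
    (hG : ∀ s ∈ Set.Ioi (0:ℝ),
      G s = s^2 + (2/((3:ℝ)-1)) * s ^ ((1:ℝ)-3) - ((3:ℝ)+1)/((3:ℝ)-1))
    (hsStar : ∀ s ∈ Set.Ioo (0:ℝ) 1, 1 < sStar s ∧ G (sStar s) = G s)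
    (hν : ∀ s ∈ Set.Ioo (0:ℝ) 1,
      ν s = (1/Real.pi) * ∫ u in s..(sStar s), 1/Real.sqrt (G s - G u)) :
    (∀ s ∈ Set.Ioi (0:ℝ), G s = (s - 1/s)^2) ∧
    (∀ s ∈ Set.Ioo (0:ℝ) 1, sStar s = 1/s) ∧
    (∀ s ∈ Set.Ioo (0:ℝ) 1,
      (1/Real.pi) * (∫ u in s..(1/s), 1/Real.sqrt ((s - 1/s)^2 - (u - 1/u)^2)) = 1/2 ∧
      ν s = 1/2) := by
  have hG' : ∀ s ∈ Ioi (0:ℝ), G s = (s - 1 / s) ^ 2 := fun s hs =>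
    (hG s hs).trans (sq_add_rpow_neg_two_sub_two hs)
  have hsStar' : ∀ s ∈ Ioo (0:ℝ) 1, sStar s = 1 / s := fun s hs => by
    obtain ⟨ht, hGt⟩ := hsStar s hs
    refine eq_one_div_of_sub_one_div_sq_eq hs.1 hs.2 ht ?_
    rwa [hG' _ (one_pos.trans ht), hG' _ hs.1] at hGt
  have hhalf : ∀ s ∈ Ioo (0:ℝ) 1,
      (1 / π) * (∫ u in s..(1 / s), 1 / √((s - 1 / s) ^ 2 - (u - 1 / u) ^ 2)) = 1 / 2 :=
    fun s hs => by
      rw [integral_one_div_sqrt_sub_one_div_sq_sub_sq hs.1 hs.2]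
      field_simp [pi_ne_zero]
  refine ⟨hG', hsStar', fun s hs => ⟨hhalf s hs, ?_⟩⟩
  rw [hν s hs, hsStar' s hs, ← hhalf s hs]
  congr 1
  refine integral_congr fun u hu => ?_
  have hle : s ≤ 1 / s := by rw [le_div_iff₀ hs.1]; nlinarith [hs.1, hs.2]
  rw [uIcc_of_le hle] at hu
  simp only [hG' s hs.1, hG' u (hs.1.trans_le hu.1)]
end
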